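/- Any 2-primal submodule N of an R-module M with β(N) = N satisfies the radical formula, i.e., ⟨E_M(N)⟩ = β(N). -/

import Mathlib

/-- A submodule `P` is completely prime if it is proper and `a • m ∈ P` implies
`m ∈ P` or `a • M ⊆ P`. -/
def IsCompletelyPrimeSubmodule {R : Type*} [Ring R] {M : Type*} [AddCommGroup M] [Module R M]
    (P : Submodule R M) : Prop :=
  P ≠ ⊤ ∧ ∀ (a : R) (m : M), a • m ∈ P → m ∈ P ∨ ∀ x : M, a • x ∈ P

/-- A submodule `P` is prime if it is proper and for every two-sided ideal `A` of `R`
and submodule `N`, `A N ⊆ P` implies `N ⊆ P` or `A M ⊆ P`. -/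
def IsPrimeSubmodule {R : Type*} [Ring R] {M : Type*} [AddCommGroup M] [Module R M]
    (P : Submodule R M) : Prop :=
  P ≠ ⊤ ∧ ∀ (A : TwoSidedIdeal R) (N : Submodule R M),
    (∀ a ∈ A, ∀ n ∈ N, a • n ∈ P) → N ≤ P ∨ ∀ a ∈ A, ∀ x : M, a • x ∈ P

/-- The prime radical `β(N)`: the intersection of all prime submodules containing `N`
(equal to `⊤ = M` if there are none). -/
def primeRadical {R : Type*} [Ring R] {M : Type*} [AddCommGroup M] [Module R M]
    (N : Submodule R M) : Submodule R M :=
  sInf {P | IsPrimeSubmodule P ∧ N ≤ P}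

/-- The completely prime radical `β_co(N)`: the intersection of all completely prime
submodules containing `N` (equal to `⊤ = M` if there are none). -/
def cpRadical {R : Type*} [Ring R] {M : Type*} [AddCommGroup M] [Module R M]
    (N : Submodule R M) : Submodule R M :=
  sInf {P | IsCompletelyPrimeSubmodule P ∧ N ≤ P}

/-- The envelope `E_M(N) = {r • m : r^k • m ∈ N for some positive integer k}`. -/
def envelope {R : Type*} [Ring R] {M : Type*} [AddCommGroup M] [Module R M]
    (N : Submodule R M) : Set M :=
  {x | ∃ (r : R) (m : M) (k : ℕ), 0 < k ∧ r ^ k • m ∈ N ∧ x = r • m}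

/-- A submodule `N` is completely semiprime if `a ^ 2 • m ∈ N` implies `a • m ∈ N`. -/
def IsCompletelySemiprimeSubmodule {R : Type*} [Ring R] {M : Type*} [AddCommGroup M]
    [Module R M] (N : Submodule R M) : Prop :=
  ∀ (a : R) (m : M), a ^ 2 • m ∈ N → a • m ∈ N

/-!
Every completely prime submodule `P` satisfies `r ^ k • m ∈ P → r • m ∈ P`, so the envelope
`E_M(N)` lies in `β_co(N)`. Passing to `M ⧸ N`, completely prime submodules pull back and prime
submodules containing `N` push forward, so `β_co(N)` maps into `β_co(0) = β(0)`, whose preimage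
lies in `β(N) = N`. Conversely `N ⊆ E_M(N)` with `r = 1`.
-/

section

variable {R : Type*} [Ring R] {M M' : Type*} [AddCommGroup M] [Module R M]
  [AddCommGroup M'] [Module R M']

theorem IsCompletelyPrimeSubmodule.smul_mem_of_pow_smul_mem {P : Submodule R M}
    (hP : IsCompletelyPrimeSubmodule P) {r : R} {m : M} :
    ∀ {k : ℕ}, 0 < k → r ^ k • m ∈ P → r • m ∈ P
  | 1, _, h => by simpa using h
  | k + 2, _, h => by
    rw [pow_succ', mul_smul] at h
    exact (hP.2 r _ h).elim (hP.smul_mem_of_pow_smul_mem k.succ_pos) (· m)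

theorem envelope_subset_cpRadical (N : Submodule R M) : envelope N ⊆ cpRadical N := by
  rintro _ ⟨r, m, k, hk, hmem, rfl⟩
  exact Submodule.mem_sInf.2 fun P ⟨hP, hNP⟩ => hP.smul_mem_of_pow_smul_mem hk (hNP hmem)

theorem subset_envelope (N : Submodule R M) : (N : Set M) ⊆ envelope N :=
  fun n hn => ⟨1, n, 1, one_pos, by simpa using hn, by simp⟩

theorem IsCompletelyPrimeSubmodule.comap {P : Submodule R M'} (hP : IsCompletelyPrimeSubmodule P)
    {f : M →ₗ[R] M'} (hf : Function.Surjective f) : IsCompletelyPrimeSubmodule (P.comap f) := by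
  refine ⟨fun htop => hP.1 ?_, fun a m hm => ?_⟩
  · rw [← Submodule.map_comap_eq_of_surjective hf P, htop, Submodule.map_top,
      LinearMap.range_eq_top.2 hf]
  · rw [Submodule.mem_comap, map_smul] at hm
    exact (hP.2 a (f m) hm).imp id fun h x => by simpa using h (f x)

theorem IsPrimeSubmodule.map {P : Submodule R M} (hP : IsPrimeSubmodule P) {f : M →ₗ[R] M'}
    (hf : Function.Surjective f) (hker : LinearMap.ker f ≤ P) : IsPrimeSubmodule (P.map f) := by
  have hcomap : (P.map f).comap f = P := by rw [Submodule.comap_map_eq, sup_eq_left.2 hker]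
  refine ⟨fun htop => hP.1 ?_, fun A N hAN => ?_⟩
  · rw [← hcomap, htop, Submodule.comap_top]
  · have hpull : ∀ a ∈ A, ∀ n ∈ N.comap f, a • n ∈ P := fun a ha n hn => by
      rw [← hcomap, Submodule.mem_comap, map_smul]
      exact hAN a ha _ hn
    refine (hP.2 A _ hpull).imp (fun h => ?_) fun h a ha y => ?_
    · rw [← Submodule.map_comap_eq_of_surjective hf N]
      exact Submodule.map_mono h
    · obtain ⟨x, rfl⟩ := hf y
      exact ⟨a • x, h a ha x, map_smul f a x⟩

theorem cpRadical_ker_le_comap_cpRadical_bot {f : M →ₗ[R] M'} (hf : Function.Surjective f) :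
    cpRadical (LinearMap.ker f) ≤ (cpRadical (⊥ : Submodule R M')).comap f :=
  fun _ hx => Submodule.mem_sInf.2 fun P ⟨hP, _⟩ =>
    Submodule.mem_sInf.1 hx _ ⟨hP.comap hf, fun _ hy => by simp [LinearMap.mem_ker.1 hy]⟩

theorem comap_primeRadical_bot_le_primeRadical_ker {f : M →ₗ[R] M'}
    (hf : Function.Surjective f) :
    (primeRadical (⊥ : Submodule R M')).comap f ≤ primeRadical (LinearMap.ker f) := by
  intro x hx
  refine Submodule.mem_sInf.2 fun P ⟨hP, hker⟩ => ?_
  have hfx : f x ∈ P.map f := Submodule.mem_sInf.1 hx _ ⟨hP.map hf hker, bot_le⟩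
  rwa [← Submodule.mem_comap, Submodule.comap_map_eq, sup_eq_left.2 hker] at hfx

end

/-- a 2-primal submodule `N` with `β(N) = N` satisfies the radical formula. -/
theorem radical_formula_of_twoPrimal_of_primeRadical_eq {R : Type*} [Ring R] {M : Type*}
    [AddCommGroup M] [Module R M] (N : Submodule R M)
    (h2p : cpRadical (⊥ : Submodule R (M ⧸ N)) = primeRadical (⊥ : Submodule R (M ⧸ N)))
    (hrad : primeRadical N = N) :
    Submodule.span R (envelope N) = primeRadical N := by
  have hker : LinearMap.ker N.mkQ = N := N.ker_mkQ
  refine le_antisymm ?_ ?_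
  · calc Submodule.span R (envelope N) ≤ cpRadical N :=
          Submodule.span_le.2 (envelope_subset_cpRadical N)
      _ ≤ (cpRadical (⊥ : Submodule R (M ⧸ N))).comap N.mkQ := by
        simpa only [hker] using cpRadical_ker_le_comap_cpRadical_bot N.mkQ_surjective
      _ = (primeRadical (⊥ : Submodule R (M ⧸ N))).comap N.mkQ := by rw [h2p]
      _ ≤ primeRadical N := by
        simpa only [hker] using comap_primeRadical_bot_le_primeRadical_ker N.mkQ_surjective
  · rw [hrad]
    exact (subset_envelope N).trans Submodule.subset_span
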